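/- For each integer m ≥ 0, let B_m be the least index n ≥ 0 such that S_n(√2) = −m. Then B_0 = 0, B_1 = 1, and B_{n+1} = 6B_n − B_{n-1} + 2 for all n ≥ 1. -/
import Mathlib


/-- The deterministic random walk `S_n(ξ) = ∑_{j=1}^n (-1)^⌊j·ξ⌋`. -/
noncomputable def S (ξ : ℝ) (n : ℕ) : ℤ :=
  ∑ j ∈ Finset.Icc 1 n, ((Int.negOnePow ⌊(j : ℝ) * ξ⌋ : ℤˣ) : ℤ)

/-- `B m` is the least index `n ≥ 0` such that `S_n(√2) = -m`. -/
noncomputable def B (m : ℕ) : ℕ :=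
  sInf {n : ℕ | S (Real.sqrt 2) n = -(m : ℤ)}

namespace SqrtTwoWalk

noncomputable def ε (j : ℕ) : ℤ := ((Int.negOnePow ⌊(j : ℝ) * Real.sqrt 2⌋ : ℤˣ) : ℤ)

lemma S_zero : S (Real.sqrt 2) 0 = 0 := by simp [S]

lemma S_succ (n : ℕ) : S (Real.sqrt 2) (n + 1) = S (Real.sqrt 2) n + ε (n + 1) := by
  unfold S ε
  rw [Finset.sum_Icc_succ_top (by omega)]

lemma eps_eq_one_or (j : ℕ) : ε j = 1 ∨ ε j = -1 := by
  rcases Int.units_eq_one_or (Int.negOnePow ⌊(j : ℝ) * Real.sqrt 2⌋) with h | h <;> simp [ε, h]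

lemma sqrt2_sq : Real.sqrt 2 ^ 2 = 2 := Real.sq_sqrt (by norm_num)

lemma sqrt2_gt : (1.414 : ℝ) < Real.sqrt 2 := by
  nlinarith [sqrt2_sq, Real.sqrt_nonneg 2]

lemma sqrt2_lt : Real.sqrt 2 < 1.415 := by
  nlinarith [sqrt2_sq, Real.sqrt_nonneg 2]

end SqrtTwoWalk

namespace SqrtTwoWalk

/-- bounds from floor hypothesis -/
lemma floor_bounds {n a : ℕ} (ha : ⌊(n : ℝ) * Real.sqrt 2⌋ = (a : ℤ)) :
    (a : ℝ) ≤ (n : ℝ) * Real.sqrt 2 ∧ (n : ℝ) * Real.sqrt 2 < (a : ℝ) + 1 := by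
  constructor
  · have := Int.floor_le ((n : ℝ) * Real.sqrt 2); rw [ha] at this; exact_mod_cast this
  · have := Int.lt_floor_add_one ((n : ℝ) * Real.sqrt 2); rw [ha] at this; exact_mod_cast this

lemma key_identity (n a : ℕ) (r : ℕ) :
    ((3 * n + 2 * a + r : ℕ) : ℝ) * Real.sqrt 2
      = 4 * n + 3 * a + (3 - 2 * Real.sqrt 2) * ((n : ℝ) * Real.sqrt 2 - a)
        + r * Real.sqrt 2 := by
  push_cast
  linear_combination (2 * (n : ℝ)) * sqrt2_sq

lemma floors (n a : ℕ) (ha : ⌊(n : ℝ) * Real.sqrt 2⌋ = (a : ℤ)) (r c : ℕ) (hr : r ≤ 5)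
    (hrc : (r = 1 ∧ c = 1) ∨ (r = 2 ∧ c = 2) ∨ (r = 3 ∧ c = 4) ∨ (r = 4 ∧ c = 5) ∨
      (r = 5 ∧ c = 7)) :
    ⌊((3 * n + 2 * a + r : ℕ) : ℝ) * Real.sqrt 2⌋ = ((4 * n + 3 * a + c : ℕ) : ℤ) := by
  obtain ⟨h1, h2⟩ := floor_bounds ha
  have hs2 := sqrt2_sq
  have hsl := sqrt2_gt
  have hsu := sqrt2_lt
  have hθ0 : (0:ℝ) ≤ (3 - 2 * Real.sqrt 2) * ((n : ℝ) * Real.sqrt 2 - a) :=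
    mul_nonneg (by nlinarith) (by linarith)
  have hθ1 : (3 - 2 * Real.sqrt 2) * ((n : ℝ) * Real.sqrt 2 - a) < (3 - 2 * Real.sqrt 2) * 1 :=
    mul_lt_mul_of_pos_left (by linarith) (by nlinarith)
  rw [Int.floor_eq_iff]
  constructor
  · rw [key_identity]
    push_cast
    rcases hrc with ⟨hr', hc⟩ | ⟨hr', hc⟩ | ⟨hr', hc⟩ | ⟨hr', hc⟩ | ⟨hr', hc⟩ <;>
      subst hr' <;> subst hc <;> push_cast <;> nlinarith
  · rw [key_identity]
    push_cast
    rcases hrc with ⟨hr', hc⟩ | ⟨hr', hc⟩ | ⟨hr', hc⟩ | ⟨hr', hc⟩ | ⟨hr', hc⟩ <;>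
      subst hr' <;> subst hc <;> push_cast <;> nlinarith

lemma floors67 (n a : ℕ) (ha : ⌊(n : ℝ) * Real.sqrt 2⌋ = (a : ℤ))
    (hg : (a : ℝ) + 2 ≤ ((n : ℝ) + 1) * Real.sqrt 2) (r c : ℕ)
    (hrc : (r = 6 ∧ c = 8) ∨ (r = 7 ∧ c = 10)) :
    ⌊((3 * n + 2 * a + r : ℕ) : ℝ) * Real.sqrt 2⌋ = ((4 * n + 3 * a + c : ℕ) : ℤ) := by
  obtain ⟨h1, h2⟩ := floor_bounds ha
  have hs2 := sqrt2_sq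
  have hsl := sqrt2_gt
  have hsu := sqrt2_lt
  have hθ1 : (3 - 2 * Real.sqrt 2) * ((n : ℝ) * Real.sqrt 2 - a) < (3 - 2 * Real.sqrt 2) * 1 :=
    mul_lt_mul_of_pos_left (by linarith) (by nlinarith)
  have hθ2 : (3 - 2 * Real.sqrt 2) * (2 - Real.sqrt 2)
      ≤ (3 - 2 * Real.sqrt 2) * ((n : ℝ) * Real.sqrt 2 - a) := by
    apply mul_le_mul_of_nonneg_left _ (by nlinarith)
    nlinarith
  have hq : (3 - 2 * Real.sqrt 2) * (2 - Real.sqrt 2) = 10 - 7 * Real.sqrt 2 := by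
    linear_combination 2 * sqrt2_sq
  rw [hq] at hθ2
  rw [Int.floor_eq_iff]
  constructor
  · rw [key_identity]
    push_cast
    rcases hrc with ⟨hr', hc⟩ | ⟨hr', hc⟩ <;> subst hr' <;> subst hc <;> push_cast <;> nlinarith
  · rw [key_identity]
    push_cast
    rcases hrc with ⟨hr', hc⟩ | ⟨hr', hc⟩ <;> subst hr' <;> subst hc <;> push_cast <;> nlinarith

lemma floor_succ_g1 (n a : ℕ) (ha : ⌊(n : ℝ) * Real.sqrt 2⌋ = (a : ℤ))
    (hg : ((n : ℝ) + 1) * Real.sqrt 2 < (a : ℝ) + 2) :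
    ⌊((n + 1 : ℕ) : ℝ) * Real.sqrt 2⌋ = ((a + 1 : ℕ) : ℤ) := by
  obtain ⟨h1, h2⟩ := floor_bounds ha
  have hsl := sqrt2_gt
  rw [Int.floor_eq_iff]
  push_cast
  constructor <;> nlinarith

lemma floor_succ_g2 (n a : ℕ) (ha : ⌊(n : ℝ) * Real.sqrt 2⌋ = (a : ℤ))
    (hg : (a : ℝ) + 2 ≤ ((n : ℝ) + 1) * Real.sqrt 2) :
    ⌊((n + 1 : ℕ) : ℝ) * Real.sqrt 2⌋ = ((a + 2 : ℕ) : ℤ) := by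
  obtain ⟨h1, h2⟩ := floor_bounds ha
  have hsu := sqrt2_lt
  rw [Int.floor_eq_iff]
  push_cast
  constructor <;> nlinarith

end SqrtTwoWalk

namespace SqrtTwoWalk

noncomputable abbrev W (n : ℕ) : ℤ := S (Real.sqrt 2) n

noncomputable def An (n : ℕ) : ℕ := (⌊(n : ℝ) * Real.sqrt 2⌋).toNat

noncomputable def Tn (n : ℕ) : ℕ := 3 * n + 2 * An n

lemma An_spec (n : ℕ) : ⌊(n : ℝ) * Real.sqrt 2⌋ = (An n : ℤ) :=
  (Int.toNat_of_nonneg (Int.floor_nonneg.2 (by positivity))).symm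

lemma An_eq {n a : ℕ} (h : ⌊(n : ℝ) * Real.sqrt 2⌋ = (a : ℤ)) : An n = a := by
  have := An_spec n
  rw [h] at this
  exact_mod_cast this.symm

lemma eps_congr {j j' : ℕ} {v v' : ℤ}
    (h : ⌊(j : ℝ) * Real.sqrt 2⌋ = v) (h' : ⌊(j' : ℝ) * Real.sqrt 2⌋ = v')
    (hpar : (v - v') % 2 = 0) : ε j = ε j' := by
  unfold ε
  rw [h, h', (Int.negOnePow_eq_iff v v').2 (Int.even_iff.2 (by omega))]

lemma eps_anticongr {j j' : ℕ} {v v' : ℤ}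
    (h : ⌊(j : ℝ) * Real.sqrt 2⌋ = v) (h' : ⌊(j' : ℝ) * Real.sqrt 2⌋ = v')
    (hpar : (v - v') % 2 = 1) : ε j = -ε j' := by
  unfold ε
  rw [h, h', (Int.negOnePow_eq_iff v (v' + 1)).2 (Int.even_iff.2 (by omega)),
    Int.negOnePow_succ]
  push_cast
  ring

lemma signs15 (n : ℕ) :
    ε (Tn n + 1) = -ε n ∧ ε (Tn n + 2) = ε n ∧ ε (Tn n + 3) = ε n ∧
      ε (Tn n + 4) = -ε n ∧ ε (Tn n + 5) = -ε n := by
  have ha := An_spec n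
  have e1 := floors n (An n) ha 1 1 (by norm_num) (by tauto)
  have e2 := floors n (An n) ha 2 2 (by norm_num) (by tauto)
  have e3 := floors n (An n) ha 3 4 (by norm_num) (by tauto)
  have e4 := floors n (An n) ha 4 5 (by norm_num) (by tauto)
  have e5 := floors n (An n) ha 5 7 (by norm_num) (by tauto)
  refine ⟨eps_anticongr e1 ha (by push_cast; omega),
    eps_congr e2 ha (by push_cast; omega),
    eps_congr e3 ha (by push_cast; omega),
    eps_anticongr e4 ha (by push_cast; omega),
    eps_anticongr e5 ha (by push_cast; omega)⟩

lemma signs67 (n : ℕ) (hg : ((An n : ℝ)) + 2 ≤ ((n : ℝ) + 1) * Real.sqrt 2) :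
    ε (Tn n + 6) = ε n ∧ ε (Tn n + 7) = ε n := by
  have ha := An_spec n
  have e6 := floors67 n (An n) ha hg 6 8 (by tauto)
  have e7 := floors67 n (An n) ha hg 7 10 (by tauto)
  exact ⟨eps_congr e6 ha (by push_cast; omega), eps_congr e7 ha (by push_cast; omega)⟩

lemma W_succ (n : ℕ) : W (n + 1) = W n + ε (n + 1) := S_succ n

lemma vals15 (n : ℕ) (hT : W (Tn n) = W n) :
    W (Tn n + 1) = W n - ε n ∧ W (Tn n + 2) = W n ∧ W (Tn n + 3) = W n + ε n ∧
      W (Tn n + 4) = W n ∧ W (Tn n + 5) = W n - ε n := by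
  obtain ⟨s1, s2, s3, s4, s5⟩ := signs15 n
  have v1 : W (Tn n + 1) = W n - ε n := by rw [W_succ, hT, s1]; ring
  have v2 : W (Tn n + 2) = W n := by
    have := W_succ (Tn n + 1); rw [show Tn n + 1 + 1 = Tn n + 2 from rfl, v1, s2] at this
    rw [this]; ring
  have v3 : W (Tn n + 3) = W n + ε n := by
    have := W_succ (Tn n + 2); rw [show Tn n + 2 + 1 = Tn n + 3 from rfl, v2, s3] at this
    rw [this]
  have v4 : W (Tn n + 4) = W n := by
    have := W_succ (Tn n + 3); rw [show Tn n + 3 + 1 = Tn n + 4 from rfl, v3, s4] at this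
    rw [this]; ring
  have v5 : W (Tn n + 5) = W n - ε n := by
    have := W_succ (Tn n + 4); rw [show Tn n + 4 + 1 = Tn n + 5 from rfl, v4, s5] at this
    rw [this]; ring
  exact ⟨v1, v2, v3, v4, v5⟩

lemma vals67 (n : ℕ) (hT : W (Tn n) = W n)
    (hg : ((An n : ℝ)) + 2 ≤ ((n : ℝ) + 1) * Real.sqrt 2) :
    W (Tn n + 6) = W n ∧ W (Tn n + 7) = W n + ε n := by
  obtain ⟨-, -, -, -, v5⟩ := vals15 n hT
  obtain ⟨s6, s7⟩ := signs67 n hg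
  have v6 : W (Tn n + 6) = W n := by
    have := W_succ (Tn n + 5); rw [show Tn n + 5 + 1 = Tn n + 6 from rfl, v5, s6] at this
    rw [this]; ring
  have v7 : W (Tn n + 7) = W n + ε n := by
    have := W_succ (Tn n + 6); rw [show Tn n + 6 + 1 = Tn n + 7 from rfl, v6, s7] at this
    rw [this]
  exact ⟨v6, v7⟩

end SqrtTwoWalk

namespace SqrtTwoWalk

lemma main_walk (n : ℕ) : W (Tn n) = W n := by
  induction n with
  | zero =>
      have h0 : An 0 = 0 := An_eq (by norm_num)
      simp [Tn, h0]
  | succ n ih =>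
      have ha := An_spec n
      rcases lt_or_ge (((n : ℝ) + 1) * Real.sqrt 2) ((An n : ℝ) + 2) with hg | hg
      · -- gap 1 : An (n+1) = An n + 1, Tn (n+1) = Tn n + 5
        have hA : An (n + 1) = An n + 1 := by
          have := floor_succ_g1 n (An n) ha hg
          exact An_eq (by exact_mod_cast this)
        have hT : Tn (n + 1) = Tn n + 5 := by simp [Tn, hA]; ring
        obtain ⟨-, -, -, -, v5⟩ := vals15 n ih
        have he : ε (n + 1) = -ε n := by
          refine eps_anticongr (v := ((An n : ℤ) + 1)) ?_ ha (by omega)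
          exact_mod_cast floor_succ_g1 n (An n) ha hg
        rw [hT, v5, W_succ, he]; ring
      · -- gap 2
        have hA : An (n + 1) = An n + 2 := by
          have := floor_succ_g2 n (An n) ha hg
          exact An_eq (by exact_mod_cast this)
        have hT : Tn (n + 1) = Tn n + 7 := by simp [Tn, hA]; ring
        obtain ⟨-, v7⟩ := vals67 n ih hg
        have he : ε (n + 1) = ε n := by
          refine eps_congr (v := ((An n : ℤ) + 2)) ?_ ha (by omega)
          exact_mod_cast floor_succ_g2 n (An n) ha hg
        rw [hT, v7, W_succ, he]

lemma Tn_succ_ge (n : ℕ) : Tn n + 5 ≤ Tn (n + 1) := by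
  have ha := An_spec n
  rcases lt_or_ge (((n : ℝ) + 1) * Real.sqrt 2) ((An n : ℝ) + 2) with hg | hg
  · have hA : An (n + 1) = An n + 1 :=
      An_eq (by exact_mod_cast floor_succ_g1 n (An n) ha hg)
    simp [Tn, hA]; omega
  · have hA : An (n + 1) = An n + 2 :=
      An_eq (by exact_mod_cast floor_succ_g2 n (An n) ha hg)
    simp [Tn, hA]; omega

lemma Tn_strictMono : StrictMono Tn := strictMono_nat_of_lt_succ fun n => by
  have := Tn_succ_ge n; omega

lemma blockLB (n k : ℕ) (h1 : Tn n < k) (h2 : k ≤ Tn (n + 1)) : W n - 1 ≤ W k := by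
  have ih := main_walk n
  have ha := An_spec n
  have heps := eps_eq_one_or n
  obtain ⟨v1, v2, v3, v4, v5⟩ := vals15 n ih
  rcases lt_or_ge (((n : ℝ) + 1) * Real.sqrt 2) ((An n : ℝ) + 2) with hg | hg
  · have hA : An (n + 1) = An n + 1 :=
      An_eq (by exact_mod_cast floor_succ_g1 n (An n) ha hg)
    have hT : Tn (n + 1) = Tn n + 5 := by simp [Tn, hA]; ring
    rw [hT] at h2
    have : k = Tn n + 1 ∨ k = Tn n + 2 ∨ k = Tn n + 3 ∨ k = Tn n + 4 ∨ k = Tn n + 5 := by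
      omega
    rcases heps with h | h <;> rw [h] at v1 v3 v5 <;>
      rcases this with rfl | rfl | rfl | rfl | rfl <;> omega
  · have hA : An (n + 1) = An n + 2 :=
      An_eq (by exact_mod_cast floor_succ_g2 n (An n) ha hg)
    have hT : Tn (n + 1) = Tn n + 7 := by simp [Tn, hA]; ring
    obtain ⟨v6, v7⟩ := vals67 n ih hg
    rw [hT] at h2
    have : k = Tn n + 1 ∨ k = Tn n + 2 ∨ k = Tn n + 3 ∨ k = Tn n + 4 ∨ k = Tn n + 5 ∨
        k = Tn n + 6 ∨ k = Tn n + 7 := by omega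
    rcases heps with h | h <;> rw [h] at v1 v3 v5 v7 <;>
      rcases this with rfl | rfl | rfl | rfl | rfl | rfl | rfl <;> omega

lemma cover (k : ℕ) (hk : 1 ≤ k) : ∃ n, Tn n < k ∧ k ≤ Tn (n + 1) := by
  induction k with
  | zero => omega
  | succ k ih =>
      rcases Nat.eq_or_lt_of_le hk with h | h
      · have h0 : An 0 = 0 := An_eq (by norm_num)
        have hT0 : Tn 0 = 0 := by simp [Tn, h0]
        have h5 := Tn_succ_ge 0
        exact ⟨0, by omega, by omega⟩
      · obtain ⟨n, hn1, hn2⟩ := ih (by omega)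
        rcases Nat.eq_or_lt_of_le hn2 with h' | h'
        · exact ⟨n + 1, by omega, by have := Tn_succ_ge (n + 1); omega⟩
        · exact ⟨n, by omega, by omega⟩

end SqrtTwoWalk

namespace SqrtTwoWalk

def tA : ℕ → ℕ × ℕ
  | 0 => (0, 0)
  | 1 => (1, 1)
  | m + 2 => (3 * (tA (m + 1)).1 + 2 * (tA (m + 1)).2 + 3,
              4 * (tA (m + 1)).1 + 3 * (tA (m + 1)).2 + 4)

lemma floor_one : ⌊((1 : ℕ) : ℝ) * Real.sqrt 2⌋ = ((1 : ℕ) : ℤ) := by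
  have h1 := sqrt2_gt
  have h2 := sqrt2_lt
  rw [Int.floor_eq_iff] <;> push_cast <;> constructor <;> nlinarith

lemma W_one : W 1 = -1 := by
  have : ε 1 = -1 := by
    unfold ε
    rw [floor_one]
    norm_num
  have h := W_succ 0
  rw [show W 0 = 0 from S_zero, this] at h
  simpa using h

lemma hit : ∀ m : ℕ, 1 ≤ m →
    W (tA m).1 = -((m : ℤ)) ∧ (∀ k, k < (tA m).1 → -((m : ℤ)) < W k) ∧
      ⌊(((tA m).1 : ℕ) : ℝ) * Real.sqrt 2⌋ = ((tA m).2 : ℤ) := by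
  intro m hm
  induction m with
  | zero => omega
  | succ m ih =>
      rcases Nat.eq_or_lt_of_le hm with h1 | h1
      · -- m + 1 = 1
        have hm0 : m = 0 := by omega
        subst hm0
        refine ⟨by simpa [tA] using W_one, ?_, by simpa [tA] using floor_one⟩
        intro k hk
        have : k = 0 := by simpa [tA] using hk
        subst this
        rw [show W 0 = 0 from S_zero]
        norm_num
      · -- m ≥ 1
        obtain ⟨hS, hLB, hF⟩ := ih (by omega)
        obtain ⟨m', rfl⟩ : ∃ m', m = m' + 1 := ⟨m - 1, by omega⟩
        obtain ⟨t, a, hp⟩ : ∃ t a, tA (m' + 1) = (t, a) :=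
          ⟨(tA (m' + 1)).1, (tA (m' + 1)).2, rfl⟩
        rw [hp] at hS hLB hF
        simp only [] at hS hLB hF
        have htA : tA (m' + 2) = (3 * t + 2 * a + 3, 4 * t + 3 * a + 4) := by
          rw [tA, hp]
        have hAn : An t = a := An_eq hF
        have hTn : Tn t = 3 * t + 2 * a := by rw [Tn, hAn]
        -- t ≥ 1
        have ht1 : 1 ≤ t := by
          by_contra h
          have : t = 0 := by omega
          rw [this, show W 0 = 0 from S_zero] at hS
          omega
        -- ε t = -1
        obtain ⟨t', rfl⟩ : ∃ t', t = t' + 1 := ⟨t - 1, by omega⟩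
        have hWt' : -((m' + 1 : ℕ) : ℤ) < W t' := hLB t' (by omega)
        have hstep := W_succ t'
        have heps : ε (t' + 1) = -1 := by
          rcases eps_eq_one_or (t' + 1) with h | h
          · rw [h] at hstep; push_cast at hWt' hS ⊢; omega
          · exact h
        have hepsa : ε (t' + 1) = ((Int.negOnePow (a : ℤ) : ℤˣ) : ℤ) := by
          unfold ε; rw [hF]
        -- values on the block after Tn t
        have hmain := main_walk (t' + 1)
        obtain ⟨v1, v2, v3, -, -⟩ := vals15 (t' + 1) hmain
        rw [heps] at v1 v3
        rw [hS] at v1 v2 v3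
        rw [show m' + 1 + 1 = m' + 2 from rfl]
        constructor
        · -- new value
          rw [htA]
          show W (3 * (t' + 1) + 2 * a + 3) = _
          rw [show 3 * (t' + 1) + 2 * a + 3 = Tn (t' + 1) + 3 by omega]
          rw [v3]; push_cast; ring
        constructor
        · -- lower bound
          rw [htA]
          intro k hk
          show -((m' + 2 : ℤ)) < W k
          rcases Nat.eq_zero_or_pos k with rfl | hk1
          · rw [show W 0 = 0 from S_zero]; omega
          rcases le_or_gt k (Tn (t' + 1)) with hkT | hkT
          · obtain ⟨n, hn1, hn2⟩ := cover k hk1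
            have hnt : n < t' + 1 := by
              by_contra hcon
              have : Tn (t' + 1) ≤ Tn n := Tn_strictMono.le_iff_le.2 (by omega)
              omega
            have hWn : -((m' + 1 : ℕ) : ℤ) < W n := hLB n hnt
            have := blockLB n k hn1 hn2
            push_cast at hWn ⊢
            omega
          · have : k = Tn (t' + 1) + 1 ∨ k = Tn (t' + 1) + 2 := by
              simp only [htA] at hk
              omega
            rcases this with rfl | rfl
            · rw [v1]; push_cast; omega
            · rw [v2]; push_cast; omega
        · -- floor invariant
          rw [htA]
          show ⌊((3 * (t' + 1) + 2 * a + 3 : ℕ) : ℝ) * Real.sqrt 2⌋ = _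
          have := floors (t' + 1) a hF 3 4 (by norm_num) (by tauto)
          rw [this]

end SqrtTwoWalk

namespace SqrtTwoWalk

lemma B_zero : B 0 = 0 := by
  apply Nat.sInf_eq_zero.2
  left
  show S (Real.sqrt 2) 0 = -((0 : ℕ) : ℤ)
  simpa using S_zero

lemma B_eq (m : ℕ) (hm : 1 ≤ m) : B m = (tA m).1 := by
  obtain ⟨hS, hLB, -⟩ := hit m hm
  have hmem : (tA m).1 ∈ {n : ℕ | S (Real.sqrt 2) n = -(m : ℤ)} := hS
  have hne : {n : ℕ | S (Real.sqrt 2) n = -(m : ℤ)}.Nonempty := ⟨_, hmem⟩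
  refine le_antisymm (Nat.sInf_le hmem) ?_
  by_contra h
  push_neg at h
  have h2 := Nat.sInf_mem hne
  have h3 := hLB (B m) h
  rw [Set.mem_setOf_eq] at h2
  have h4 : W (B m) = -(m : ℤ) := h2
  omega

end SqrtTwoWalk

theorem stmt_6 :
    B 0 = 0 ∧ B 1 = 1 ∧
    (∀ n : ℕ, 1 ≤ n → (B (n + 1) : ℤ) = 6 * B n - B (n - 1) + 2) := by
  refine ⟨SqrtTwoWalk.B_zero, ?_, ?_⟩
  · rw [SqrtTwoWalk.B_eq 1 le_rfl]
    rfl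
  · intro n hn
    obtain ⟨k, rfl⟩ : ∃ k, n = k + 1 := ⟨n - 1, by omega⟩
    rcases Nat.eq_zero_or_pos k with rfl | hk
    · rw [SqrtTwoWalk.B_eq 2 (by norm_num), SqrtTwoWalk.B_eq 1 le_rfl]
      show ((SqrtTwoWalk.tA 2).1 : ℤ) = 6 * ((SqrtTwoWalk.tA 1).1 : ℤ) - (B 0 : ℤ) + 2
      rw [SqrtTwoWalk.B_zero]
      rfl
    · obtain ⟨j, rfl⟩ : ∃ j, k = j + 1 := ⟨k - 1, by omega⟩
      rw [SqrtTwoWalk.B_eq (j + 1 + 1 + 1) (by omega),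
        SqrtTwoWalk.B_eq (j + 1 + 1) (by omega),
        show j + 1 + 1 - 1 = j + 1 from rfl,
        SqrtTwoWalk.B_eq (j + 1) (by omega)]
      obtain ⟨t, a, hp⟩ : ∃ t a, SqrtTwoWalk.tA (j + 1) = (t, a) :=
        ⟨_, _, rfl⟩
      have h2 : SqrtTwoWalk.tA (j + 2) = (3 * t + 2 * a + 3, 4 * t + 3 * a + 4) := by
        rw [SqrtTwoWalk.tA, hp]
      have h3 : SqrtTwoWalk.tA (j + 3) =
          (3 * (3 * t + 2 * a + 3) + 2 * (4 * t + 3 * a + 4) + 3,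
           4 * (3 * t + 2 * a + 3) + 3 * (4 * t + 3 * a + 4) + 4) := by
        rw [show j + 3 = (j + 1) + 2 from rfl, SqrtTwoWalk.tA,
          show j + 1 + 1 = j + 2 from rfl, h2]
      rw [show j + 1 + 1 + 1 = j + 3 from rfl, show j + 1 + 1 = j + 2 from rfl, h2, h3, hp]
      push_cast
      ring
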